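/- arXiv:1411.7970 — 5 statements merged into one kernel-verified Lean document; each statement's English description precedes it below -/
import Mathlib

section
/- Let n ≥ 1, let C be a cyclic group of order n acting on a finite set X, and let p(t) ∈ ℤ[t] be a polynomial with integer coefficients such that the triple (X, p(t), C) exhibits the cyclic sieving phenomenon, i.e. for every c ∈ C and every complex root of unity ω whose multiplicative order equals the order of c, the number of fixed points |X^c| equals p(ω). Then for every positive divisor l of n and every integer i coprime to l, one has the congruence p(t^i) ≡ p(t) modulo the ideal generated by (t^l − 1) in ℤ[t]. -/
open Polynomial

/-!
Fix an `l`-th root of unity `ω`. Its order `d` divides `l`, hence `n`, so the cyclic group `C`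
contains an element `c` of order `d`; since `i` is coprime to `d`, `ω ^ i` has order `d` as well.
The sieving hypothesis applied to `c` twice gives `p(ω ^ i) = |S^c| = p(ω)`. Thus `p(t^i) - p(t)`
vanishes at every root of the separable polynomial `t^l - 1`, which therefore divides it.
-/

def IsCyclicSieving (C S : Type*) [Group C] [MulAction C S] (p : ℤ[X]) : Prop :=
  ∀ (c : C) (ω : ℂ), orderOf ω = orderOf c →
    (Nat.card (MulAction.fixedBy S c) : ℂ) = aeval ω p

theorem Polynomial.X_pow_sub_one_dvd_of_aeval_eq_zero {R K : Type*} [CommRing R] [Field K]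
    [Algebra R K] (hinj : Function.Injective (algebraMap R K)) {l : ℕ} (hl : 0 < l) {ζ : K}
    (hζ : IsPrimitiveRoot ζ l) {q : R[X]} (hq : ∀ ω : K, ω ^ l = 1 → aeval ω q = 0) :
    X ^ l - 1 ∣ q := by
  have hmonic : (X ^ l - 1 : R[X]).Monic := by simpa using monic_X_pow_sub_C (1 : R) hl.ne'
  rw [← map_dvd_map (algebraMap R K) hinj hmonic, Polynomial.map_sub,
    Polynomial.map_pow, map_X, Polynomial.map_one, X_pow_sub_one_eq_prod hl hζ]
  refine Finset.prod_dvd_of_coprime (fun a _ b _ hab ↦ ?_) fun ω hω ↦ ?_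
  · exact isCoprime_X_sub_C_of_isUnit_sub (sub_ne_zero_of_ne hab).isUnit
  · rw [dvd_iff_isRoot, IsRoot.def, eval_map_algebraMap]
    exact hq ω ((mem_nthRootsFinset hl 1).1 hω)

theorem IsCyclic.exists_orderOf_eq_of_dvd {C : Type*} [Group C] [IsCyclic C] [Finite C] {d : ℕ}
    (hd : d ∣ Nat.card C) : ∃ c : C, orderOf c = d := by
  obtain ⟨g, hg⟩ := IsCyclic.exists_ofOrder_eq_natCard (α := C)
  refine ⟨g ^ (Nat.card C / d), ?_⟩
  rw [← hg] at hd ⊢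
  exact orderOf_pow_orderOf_div (orderOf_pos g).ne' hd

namespace IsCyclicSieving

variable {C S : Type*} [Group C] [IsCyclic C] [Finite C] [MulAction C S] {p : ℤ[X]}

theorem aeval_eq_of_orderOf_eq (h : IsCyclicSieving C S p) {ω ω' : ℂ}
    (hω : orderOf ω ∣ Nat.card C) (hωω' : orderOf ω = orderOf ω') : aeval ω p = aeval ω' p := by
  obtain ⟨c, hc⟩ := IsCyclic.exists_orderOf_eq_of_dvd hω
  rw [← h c ω hc.symm, ← h c ω' (hωω'.symm.trans hc.symm)]

theorem aeval_pow_eq (h : IsCyclicSieving C S p) {l i : ℕ} (hl : l ∣ Nat.card C)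
    (hi : i.Coprime l) {ω : ℂ} (hω : ω ^ l = 1) : aeval (ω ^ i) p = aeval ω p := by
  have hωl : orderOf ω ∣ l := orderOf_dvd_of_pow_eq_one hω
  have hωi : orderOf (ω ^ i) = orderOf ω := (hi.coprime_dvd_right hωl).symm.orderOf_pow
  exact (h.aeval_eq_of_orderOf_eq (hωl.trans hl) hωi.symm).symm

end IsCyclicSieving

theorem cyclic_sieving_congruence_general
    (n : ℕ)
    (C : Type*) [Group C] [IsCyclic C] [Fintype C] (hC : Fintype.card C = n)
    (S : Type*) [MulAction C S]
    (p : Polynomial ℤ)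
    (hsieve : ∀ (c : C) (ω : ℂ), orderOf ω = orderOf c →
      (Nat.card (MulAction.fixedBy S c) : ℂ) = Polynomial.aeval ω p)
    (l : ℕ) (hl : 0 < l) (hln : l ∣ n) (i : ℕ) (hi : Nat.Coprime i l) :
    p.comp (Polynomial.X ^ i) - p ∈
      Ideal.span {(Polynomial.X : Polynomial ℤ) ^ l - 1} := by
  have hsieve : IsCyclicSieving C S p := hsieve
  have hlC : l ∣ Nat.card C := by rwa [Nat.card_eq_fintype_card, hC]
  rw [Ideal.mem_span_singleton]
  refine X_pow_sub_one_dvd_of_aeval_eq_zero (RingHom.injective_int (algebraMap ℤ ℂ)) hl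
    (Complex.isPrimitiveRoot_exp l hl.ne') fun ω hω ↦ ?_
  rw [map_sub, aeval_comp, map_pow, aeval_X, hsieve.aeval_pow_eq hlC hi hω, sub_self]

/-- **Cyclic sieving phenomenon congruence.**
If a cyclic group `C` of order `n ≥ 1` acts on a finite set `S` and `p ∈ ℤ[t]` is such that
the triple `(S, p, C)` exhibits the cyclic sieving phenomenon (the number of fixed points of
any `c ∈ C` equals the value of `p` at any complex root of unity whose multiplicative order
equals the order of `c`), then for every positive divisor `l` of `n` and every `i` coprime
to `l` one has `p(t^i) ≡ p(t)` modulo the ideal of `ℤ[t]` generated by `t^l - 1`. -/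
theorem cyclic_sieving_congruence
    (n : ℕ) (hn : 1 ≤ n)
    (C : Type*) [Group C] [IsCyclic C] [Fintype C] (hC : Fintype.card C = n)
    (S : Type*) [Fintype S] [MulAction C S]
    (p : Polynomial ℤ)
    (hsieve : ∀ (c : C) (ω : ℂ), orderOf ω = orderOf c →
      (Nat.card (MulAction.fixedBy S c) : ℂ) = Polynomial.aeval ω p)
    (l : ℕ) (hl : 0 < l) (hln : l ∣ n) (i : ℕ) (hi : Nat.Coprime i l) :
    p.comp (Polynomial.X ^ i) - p ∈
      Ideal.span {(Polynomial.X : Polynomial ℤ) ^ l - 1} :=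
  cyclic_sieving_congruence_general n C hC S p hsieve l hl hln i hi
end

section
/- Let (C, ⊗, 1) be an additive symmetric monoidal category (in particular having finite biproducts), let l ≥ 1 be an integer, and let b be an object of C with b^{⊗l} ≅ 1. For a polynomial p = a₀ + a₁t + ⋯ + a_n t^n with non-negative integer coefficients, write p(b) := 1^{⊕a₀} ⊕ b^{⊕a₁} ⊕ (b^{⊗2})^{⊕a₂} ⊕ ⋯ ⊕ (b^{⊗n})^{⊕a_n}. If p, q ∈ ℕ[t] satisfy p ≡ q modulo the ideal generated by (t^l − 1) in ℤ[t], then p(b) ≅ q(b) in C. -/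
open CategoryTheory CategoryTheory.Limits CategoryTheory.MonoidalCategory Polynomial

universe v u

variable {C : Type u} [Category.{v} C] [MonoidalCategory C] [Preadditive C]
  [HasFiniteBiproducts C]

/-- The `j`-fold tensor power `b^{⊗j}` of an object `b`. -/
def tensorPow (b : C) : ℕ → C
  | 0 => 𝟙_ C
  | j + 1 => tensorPow b j ⊗ b

/-- The evaluation `p(b) = 𝟙^{⊕a₀} ⊕ b^{⊕a₁} ⊕ (b^{⊗2})^{⊕a₂} ⊕ ⋯` of a polynomial
`p = a₀ + a₁ t + ⋯ + aₙ tⁿ` with natural number coefficients at an object `b`. -/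
noncomputable def evalPoly (p : Polynomial ℕ) (b : C) : C :=
  ⨁ fun i : Fin (p.natDegree + 1) => ⨁ fun _ : Fin (p.coeff i.1) => tensorPow b i.1

/-!
Since `b^{⊗l} ≅ 𝟙`, the summand `b^{⊗j}` of `p(b)` only depends on `j mod l`, so `p(b)` is
determined up to isomorphism by the multiplicities `∑_{j ≡ r (mod l)} aⱼ`, `r ∈ ℤ/l`. These are
the coefficients of the image of `p` under the ring map `ℤ[t] → ℤ[ℤ/l]`, `t ↦ [1]`, which kills
`t^l - 1`; hence congruent polynomials have the same multiplicities.
-/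

noncomputable def reduceExponents (R : Type*) [Semiring R] (l : ℕ) :
    R[X] →+* AddMonoidAlgebra R (ZMod l) :=
  (AddMonoidAlgebra.mapDomainRingHom R (Nat.castAddMonoidHom (ZMod l))).comp
    (toFinsuppIso R).toRingHom

theorem reduceExponents_coeff {R : Type*} [Semiring R] (l : ℕ) (p : R[X]) (r : ZMod l)
    {n : ℕ} (hn : p.natDegree < n) :
    (reduceExponents R l p).coeff r =
      ∑ i ∈ Finset.range n, if (i : ZMod l) = r then p.coeff i else 0 := by
  rw [← p.sum_over_range' (f := fun i a => if (i : ZMod l) = r then a else 0)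
    (fun _ => ite_self 0) n hn]
  simp only [reduceExponents, RingEquiv.toRingHom_eq_coe, RingHom.coe_comp, RingHom.coe_coe,
    Function.comp_apply, toFinsuppIso_apply, AddMonoidAlgebra.mapDomainRingHom_apply,
    AddMonoidAlgebra.mapDomain, Finsupp.mapDomain, Nat.coe_castAddMonoidHom,
    AddMonoidAlgebra.ofCoeff_finsuppSum, AddMonoidAlgebra.ofCoeff_single,
    AddMonoidAlgebra.coeff_finsuppSum, AddMonoidAlgebra.coeff_single, Finsupp.sum_apply,
    Finsupp.single_apply, sum_def]
  rfl

theorem reduceExponents_map_coeff {R S : Type*} [Semiring R] [Semiring S] (φ : R →+* S)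
    (l : ℕ) (p : R[X]) (r : ZMod l) :
    (reduceExponents S l (p.map φ)).coeff r = φ ((reduceExponents R l p).coeff r) := by
  have hp : (p.map φ).natDegree < p.natDegree + 1 := Nat.lt_succ_of_le (natDegree_map_le ..)
  rw [reduceExponents_coeff l _ r hp, reduceExponents_coeff l p r p.natDegree.lt_succ_self,
    map_sum]
  simp only [coeff_map, apply_ite φ, map_zero]

theorem reduceExponents_X (R : Type*) [Semiring R] (l : ℕ) :
    reduceExponents R l X = AddMonoidAlgebra.single 1 1 := by
  simp [reduceExponents]

theorem reduceExponents_X_pow_sub_one (R : Type*) [Ring R] (l : ℕ) :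
    reduceExponents R l (X ^ l - 1) = 0 := by
  rw [map_sub, map_pow, map_one, reduceExponents_X, AddMonoidAlgebra.single_pow, nsmul_one,
    ZMod.natCast_self, one_pow, ← AddMonoidAlgebra.one_def, sub_self]

theorem reduceExponents_eq_of_sub_mem_span {R : Type*} [CommRing R] {l : ℕ} {f g : R[X]}
    (h : f - g ∈ Ideal.span {(X : R[X]) ^ l - 1}) :
    reduceExponents R l f = reduceExponents R l g := by
  obtain ⟨a, ha⟩ := Ideal.mem_span_singleton'.mp h
  rw [← sub_eq_zero, ← map_sub, ← ha, map_mul, reduceExponents_X_pow_sub_one, mul_zero]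

theorem Fintype.card_subtype_sigma_fst {ι : Type*} [Fintype ι] (α : ι → Type*)
    [∀ i, Fintype (α i)] (P : ι → Prop) [DecidablePred P] :
    Fintype.card {x : Σ i, α i // P x.1} = ∑ i, if P i then Fintype.card (α i) else 0 := by
  rw [Fintype.card_congr (Equiv.subtypeSigmaEquiv α P), Fintype.card_sigma, ← Finset.sum_filter]
  exact (Finset.sum_subtype _ (fun i => Finset.mem_filter_univ (p := P) i)
    fun i => Fintype.card (α i)).symm

theorem card_exponents_congr (l : ℕ) (p : ℕ[X]) (r : ZMod l) :
    Fintype.card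
        {x : Σ i : Fin (p.natDegree + 1), Fin (p.coeff i) // ((x.1 : ℕ) : ZMod l) = r} =
      (reduceExponents ℕ l p).coeff r := by
  rw [Fintype.card_subtype_sigma_fst _ fun i : Fin _ => ((i : ℕ) : ZMod l) = r,
    reduceExponents_coeff l p r p.natDegree.lt_succ_self]
  simp only [Fintype.card_fin]
  exact Fin.sum_univ_eq_sum_range (fun i => if (i : ZMod l) = r then p.coeff i else 0) _

noncomputable def CategoryTheory.Limits.biproduct.isoOfCardFiberEq {D : Type*} [Category D]
    [HasZeroMorphisms D] [HasFiniteBiproducts D] {ι ι' κ : Type*} [Fintype ι] [Fintype ι']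
    [DecidableEq κ] (f : ι → κ) (g : ι' → κ) (F : κ → D)
    (h : ∀ k, Fintype.card {x // f x = k} = Fintype.card {y // g y = k}) :
    (⨁ fun x => F (f x)) ≅ ⨁ fun y => F (g y) :=
  biproduct.whiskerEquiv (Equiv.ofFiberEquiv fun k => Fintype.equivOfCardEq (h k))
    fun x => eqToIso (congrArg F (Equiv.ofFiberEquiv_map _ x))

def tensorPowAddIso (b : C) (m : ℕ) :
    (n : ℕ) → (tensorPow b (m + n) ≅ tensorPow b m ⊗ tensorPow b n)
  | 0 => (ρ_ _).symm
  | n + 1 => whiskerRightIso (tensorPowAddIso b m n) b ≪≫ α_ _ _ _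

def tensorPowAddMulIso {b : C} {l : ℕ} (e : tensorPow b l ≅ 𝟙_ C) (m : ℕ) :
    (k : ℕ) → (tensorPow b (m + l * k) ≅ tensorPow b m)
  | 0 => Iso.refl _
  | k + 1 => eqToIso (congrArg (tensorPow b) (Nat.add_assoc m (l * k) l).symm) ≪≫
      tensorPowAddIso b _ l ≪≫ whiskerLeftIso _ e ≪≫ ρ_ _ ≪≫ tensorPowAddMulIso e m k

def tensorPowModIso {b : C} {l : ℕ} (e : tensorPow b l ≅ 𝟙_ C) (j : ℕ) :
    tensorPow b j ≅ tensorPow b (j : ZMod l).val :=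
  eqToIso (congrArg (tensorPow b) (Nat.mod_add_div j l).symm) ≪≫
    tensorPowAddMulIso e (j % l) (j / l) ≪≫
    eqToIso (congrArg (tensorPow b) (ZMod.val_natCast l j).symm)

noncomputable def evalPolyIsoBiproductMod {b : C} {l : ℕ} (e : tensorPow b l ≅ 𝟙_ C)
    (p : ℕ[X]) :
    evalPoly p b ≅
      ⨁ fun x : Σ i : Fin (p.natDegree + 1), Fin (p.coeff i) =>
        tensorPow b ((x.1 : ℕ) : ZMod l).val :=
  biproductBiproductIso _ _ ≪≫ biproduct.mapIso fun x => tensorPowModIso e x.1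

theorem evalPoly_iso_of_congruent_general
    (l : ℕ) (b : C) (hb : Nonempty (tensorPow b l ≅ 𝟙_ C))
    (p q : Polynomial ℕ)
    (hpq : p.map (Nat.castRingHom ℤ) - q.map (Nat.castRingHom ℤ) ∈
      Ideal.span {(X : Polynomial ℤ) ^ l - 1}) :
    Nonempty (evalPoly p b ≅ evalPoly q b) := by
  obtain ⟨e⟩ := hb
  have hcoeff (r : ZMod l) :
      (reduceExponents ℕ l p).coeff r = (reduceExponents ℕ l q).coeff r := by
    have := congrArg (·.coeff r) (reduceExponents_eq_of_sub_mem_span hpq)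
    simpa only [reduceExponents_map_coeff, eq_natCast, Nat.cast_inj] using this
  exact ⟨evalPolyIsoBiproductMod e p ≪≫
    biproduct.isoOfCardFiberEq _ _ (fun r => tensorPow b r.val)
      (fun r => (card_exponents_congr l p r).trans
        ((hcoeff r).trans (card_exponents_congr l q r).symm)) ≪≫
    (evalPolyIsoBiproductMod e q).symm⟩

/-- If `(C, ⊗, 𝟙)` is an additive symmetric monoidal category, `b` is an object with
`b^{⊗l} ≅ 𝟙`, and `p, q ∈ ℕ[t]` are congruent modulo the ideal of `ℤ[t]` generated by
`t^l - 1`, then `p(b) ≅ q(b)`. -/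
theorem evalPoly_iso_of_congruent
    [SymmetricCategory C] [MonoidalPreadditive C]
    (l : ℕ) (hl : 0 < l) (b : C) (hb : Nonempty (tensorPow b l ≅ 𝟙_ C))
    (p q : Polynomial ℕ)
    (hpq : p.map (Nat.castRingHom ℤ) - q.map (Nat.castRingHom ℤ) ∈
      Ideal.span {(X : Polynomial ℤ) ^ l - 1}) :
    Nonempty (evalPoly p b ≅ evalPoly q b) :=
  evalPoly_iso_of_congruent_general l b hb p q hpq
end

section
/- Let m ≤ n be non-negative integers, let l be a positive divisor of n, and let i be an integer coprime to l. Then the Gaussian polynomial satisfies the congruence (n choose m)_{t^i} ≡ (n choose m)_t modulo the ideal generated by (t^l − 1) in ℤ[t], where (n choose m)_{t^i} denotes the polynomial obtained by substituting t^i for t. -/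
/-!
Since `X ^ l - 1` is monic with distinct complex roots, it suffices to show `g(ζ ^ i) = g(ζ)` for
every `l`-th root of unity `ζ`. If `ζ` has order `d`, then `d ∣ n` and `ζ ^ i` is again a primitive
`d`-th root of unity. Pulling a factor `1 - X ^ d` out of each `1 - X ^ k` with `d ∣ k`, the
denominator of the Gaussian polynomial contains `⌊m/d⌋` of them and the numerator `⌈m/d⌉`. After
cancelling, evaluation at a primitive `d`-th root `ζ` gives `g(ζ) = 0` when `d ∤ m`, while for
`d ∣ m` the remaining factors `1 - ζ ^ k` with `d ∤ k` agree in numerator and denominator and the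
quotients `k / d` leave a ratio of integers. Either way `g(ζ)` depends on `d` only.
-/

open Polynomial Finset

theorem prod_one_sub_X_pow_eq_pow_mul {R ι : Type*} [CommRing R] (s : Finset ι) (e : ι → ℕ)
    (d : ℕ) :
    ∏ j ∈ s, (1 - X ^ e j : R[X]) = (1 - X ^ d) ^ #{j ∈ s | d ∣ e j} *
      ((∏ j ∈ s with d ∣ e j, ∑ r ∈ range (e j / d), (X ^ d) ^ r) *
        ∏ j ∈ s with ¬ d ∣ e j, (1 - X ^ e j)) := by
  rw [← prod_filter_mul_prod_filter_not s (fun j => d ∣ e j), ← mul_assoc, ← prod_const,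
    ← prod_mul_distrib]
  congr 1
  refine prod_congr rfl fun j hj => ?_
  rw [mul_neg_geom_sum, ← pow_mul, Nat.mul_div_cancel' (mem_filter.1 hj).2]

theorem card_filter_dvd_range_add (m d : ℕ) :
    #{j ∈ range m | d ∣ j} + (if d ∣ m then 1 else 0) = m / d + 1 := by
  calc #{j ∈ range m | d ∣ j} + (if d ∣ m then 1 else 0)
      = ∑ j ∈ range (m + 1), if d ∣ j then 1 else 0 := by rw [card_filter, sum_range_succ]
    _ = #{j ∈ range m | d ∣ j + 1} + 1 := by rw [sum_range_succ', card_filter]; simp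
    _ = m / d + 1 := by rw [Nat.card_multiples]

namespace IsPrimitiveRoot

variable {K : Type*} [CommRing K] {ζ : K} {d : ℕ}

theorem prod_filter_not_dvd_one_sub_pow_ne_zero [IsDomain K] (hζ : IsPrimitiveRoot ζ d)
    {ι : Type*} (s : Finset ι) (e : ι → ℕ) : ∏ j ∈ s with ¬ d ∣ e j, (1 - ζ ^ e j) ≠ 0 :=
  prod_ne_zero_iff.2 fun _ hj => sub_ne_zero.2 fun h => (mem_filter.1 hj).2 <|
    (hζ.pow_eq_one_iff_dvd _).1 h.symm

theorem prod_filter_not_dvd_one_sub_pow_sub (hζ : IsPrimitiveRoot ζ d) {m n : ℕ}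
    (hmn : m ≤ n) (hdm : d ∣ m) (hdn : d ∣ n) :
    ∏ j ∈ range m with ¬ d ∣ n - j, (1 - ζ ^ (n - j)) =
      ∏ j ∈ range m with ¬ d ∣ j + 1, (1 - ζ ^ (j + 1)) := by
  have hdnm : d ∣ n - m := Nat.dvd_sub hdn hdm
  simp only [prod_filter]
  rw [← prod_range_reflect _ m]
  refine prod_congr rfl fun j hj => ?_
  have hj : n - (m - 1 - j) = (n - m) + (j + 1) := by
    have := mem_range.1 hj
    omega
  simp only [hj, Nat.dvd_add_right hdnm, pow_add, (hζ.pow_eq_one_iff_dvd _).2 hdnm, one_mul]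

theorem eval_mul_prod_eq [IsDomain K] [CharZero K] (hζ : IsPrimitiveRoot ζ d) (hd : 0 < d)
    {m n : ℕ} (hmn : m ≤ n) (hdn : d ∣ n) {G : K[X]}
    (hG : G * ∏ j ∈ range m, (1 - X ^ (j + 1)) = ∏ j ∈ range m, (1 - X ^ (n - j))) :
    G.eval ζ * ((∏ j ∈ range m with d ∣ j + 1, (j + 1) / d : ℕ) : K) =
      if d ∣ m then ((∏ j ∈ range m with d ∣ n - j, (n - j) / d : ℕ) : K) else 0 := by
  have hcount : #{j ∈ range m | d ∣ n - j} = m / d + if d ∣ m then 0 else 1 := by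
    have := card_filter_dvd_range_add m d
    rw [filter_congr fun j hj => Nat.dvd_sub_iff_right (by have := mem_range.1 hj; omega) hdn]
    split_ifs at this ⊢ <;> omega
  have hX : (1 - X ^ d : K[X]) ≠ 0 := fun h => by
    simpa [zero_pow hd.ne'] using congrArg (eval 0) h
  rw [prod_one_sub_X_pow_eq_pow_mul _ (· + 1) d, prod_one_sub_X_pow_eq_pow_mul _ (n - ·) d,
    Nat.card_multiples, hcount, pow_add, mul_left_comm, mul_assoc] at hG
  have hζG := congrArg (eval ζ) (mul_left_cancel₀ (pow_ne_zero _ hX) hG)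
  simp only [eval_mul, eval_pow, eval_sub, eval_one, eval_X, eval_prod, eval_finsetSum,
    hζ.pow_eq_one, one_pow, sum_const, card_range, nsmul_eq_mul, mul_one, sub_self] at hζG
  have hP := hζ.prod_filter_not_dvd_one_sub_pow_ne_zero (range m) (· + 1)
  rw [← mul_assoc] at hζG
  split_ifs at hζG ⊢ with hdm
  · rw [hζ.prod_filter_not_dvd_one_sub_pow_sub hmn hdm hdn, pow_zero, one_mul] at hζG
    push_cast
    exact mul_right_cancel₀ hP hζG
  · rw [pow_one, zero_mul] at hζG
    push_cast
    exact (mul_eq_zero.1 hζG).resolve_right hP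

theorem eval_eq_of_mul_prod_eq [IsDomain K] [CharZero K] {ζ' : K} (hζ : IsPrimitiveRoot ζ d)
    (hζ' : IsPrimitiveRoot ζ' d) (hd : 0 < d) {m n : ℕ} (hmn : m ≤ n) (hdn : d ∣ n) {G : K[X]}
    (hG : G * ∏ j ∈ range m, (1 - X ^ (j + 1)) = ∏ j ∈ range m, (1 - X ^ (n - j))) :
    G.eval ζ = G.eval ζ' := by
  have hD : ((∏ j ∈ range m with d ∣ j + 1, (j + 1) / d : ℕ) : K) ≠ 0 :=
    Nat.cast_ne_zero.2 <| prod_ne_zero_iff.2 fun j hj =>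
      (Nat.div_pos (Nat.le_of_dvd j.succ_pos (mem_filter.1 hj).2) hd).ne'
  exact mul_right_cancel₀ hD <|
    (hζ.eval_mul_prod_eq hd hmn hdn hG).trans (hζ'.eval_mul_prod_eq hd hmn hdn hG).symm

end IsPrimitiveRoot

theorem X_pow_sub_one_dvd_of_forall_isRoot {K : Type*} [Field K] {μ : K} {l : ℕ}
    (hμ : IsPrimitiveRoot μ l) (hl : 0 < l) {p : K[X]}
    (h : ∀ ζ ∈ nthRootsFinset l (1 : K), p.IsRoot ζ) : X ^ l - 1 ∣ p := by
  rw [X_pow_sub_one_eq_prod hl hμ]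
  exact prod_dvd_of_coprime
    (fun a _ b _ hab => isCoprime_X_sub_C_of_isUnit_sub (sub_ne_zero.2 hab).isUnit)
    fun ζ hζ => dvd_iff_isRoot.2 (h ζ hζ)

theorem mem_span_X_pow_sub_one_of_forall_isRoot {l : ℕ} (hl : 0 < l) {p : ℤ[X]}
    (h : ∀ ζ : ℂ, ζ ^ l = 1 → (p.map (Int.castRingHom ℂ)).IsRoot ζ) :
    p ∈ Ideal.span {X ^ l - 1} := by
  have hmonic : (X ^ l - 1 : ℤ[X]).Monic := by simpa using monic_X_pow_sub_C (1 : ℤ) hl.ne'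
  rw [Ideal.mem_span_singleton,
    ← map_dvd_map (Int.castRingHom ℂ) (RingHom.injective_int _) hmonic,
    Polynomial.map_sub, Polynomial.map_pow, map_X, Polynomial.map_one]
  exact X_pow_sub_one_dvd_of_forall_isRoot (Complex.isPrimitiveRoot_exp l hl.ne') hl
    fun ζ hζ => h ζ ((mem_nthRootsFinset hl 1).1 hζ)

/-- **Congruence for Gaussian polynomials.**
Let `m ≤ n`, let `l` be a positive divisor of `n` and let `i` be coprime to `l`.  Let
`g ∈ ℤ[t]` be the Gaussian polynomial `(n choose m)_t`, i.e. the (unique) polynomial with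
`g * (1-t)(1-t²)⋯(1-t^m) = (1-t^n)(1-t^{n-1})⋯(1-t^{n-m+1})`.  Then
`g(t^i) ≡ g(t)` modulo the ideal of `ℤ[t]` generated by `t^l - 1`. -/
theorem gaussian_polynomial_congruence
    (n m : ℕ) (hmn : m ≤ n)
    (l : ℕ) (hl : 0 < l) (hln : l ∣ n)
    (i : ℕ) (hi : Nat.Coprime i l)
    (g : Polynomial ℤ)
    (hg : g * ∏ j ∈ Finset.range m, ((1 : Polynomial ℤ) - X ^ (j + 1))
        = ∏ j ∈ Finset.range m, ((1 : Polynomial ℤ) - X ^ (n - j))) :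
    g.comp (X ^ i) - g ∈ Ideal.span {(X : Polynomial ℤ) ^ l - 1} := by
  refine mem_span_X_pow_sub_one_of_forall_isRoot hl fun ζ hζl => ?_
  have hG : g.map (Int.castRingHom ℂ) * ∏ j ∈ range m, (1 - X ^ (j + 1)) =
      ∏ j ∈ range m, (1 - X ^ (n - j)) := by
    simpa [Polynomial.map_prod] using congrArg (map (Int.castRingHom ℂ)) hg
  have hdl : orderOf ζ ∣ l := orderOf_dvd_of_pow_eq_one hζl
  have hζ : IsPrimitiveRoot ζ (orderOf ζ) := .orderOf ζ
  have hζi : IsPrimitiveRoot (ζ ^ i) (orderOf ζ) := hζ.pow_of_coprime i (hi.coprime_dvd_right hdl)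
  simp only [IsRoot, Polynomial.map_sub, map_comp, Polynomial.map_pow, map_X, eval_sub,
    eval_comp, eval_pow, eval_X, sub_eq_zero]
  exact hζi.eval_eq_of_mul_prod_eq hζ (Nat.pos_of_dvd_of_pos hdl hl) hmn (hdl.trans hln) hG
end

section
/- Let p₁, …, p_s be pairwise distinct prime numbers and r₁, …, r_s positive integers. Then in the polynomial ring ℤ[t], the intersection of the principal ideals generated by (1 − t^{p_i^{r_i}}) for i = 1, …, s equals the principal ideal generated by (1 − t)·∏_{i=1}^{s} (1 + t + t² + ⋯ + t^{p_i^{r_i} − 1}). -/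
/-!
Write `1 - t^n = (1 - t) gₙ` with `gₙ = 1 + t + ⋯ + t^{n-1}`. For coprime `m, n`, any common
divisor `d` of `gₘ` and `gₙ` divides `t - 1`: modulo `d`, the element `t` satisfies `t^m = t^n = 1`,
hence `t = 1`. As `t - 1` is irreducible and `gₘ(1) = m`, `gₙ(1) = n` do not both vanish, `gₘ` and
`gₙ` are relatively prime. Since `ℤ[t]` is a UFD, a polynomial divisible by every `(1 - t) g_{pᵢ^{rᵢ}}`
is divisible by `(1 - t) ∏ᵢ g_{pᵢ^{rᵢ}}`.
-/

open Polynomial Finset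

theorem dvd_sub_one_of_dvd_pow_sub_one {R : Type*} [CommRing R] {d x : R} {m n : ℕ}
    (hmn : m.Coprime n) (hm : d ∣ x ^ m - 1) (hn : d ∣ x ^ n - 1) : d ∣ x - 1 := by
  simp only [← Ideal.Quotient.eq_zero_iff_dvd, map_sub, map_pow, map_one, sub_eq_zero] at hm hn ⊢
  exact (pow_eq_one_iff_of_coprime hmn).mp ⟨hm, hn⟩

section GeomSum

variable {R : Type*} [CommRing R]

theorem X_sub_one_dvd_geom_sum_iff {n : ℕ} :
    (X - 1 : R[X]) ∣ ∑ j ∈ range n, X ^ j ↔ (n : R) = 0 := by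
  rw [← C_1, dvd_iff_isRoot]
  simp

theorem isRelPrime_geom_sum [IsDomain R] [CharZero R] {m n : ℕ} (hmn : m.Coprime n) :
    IsRelPrime (∑ j ∈ range m, (X : R[X]) ^ j) (∑ j ∈ range n, X ^ j) := by
  intro d hdm hdn
  have hd : d ∣ X - 1 := dvd_sub_one_of_dvd_pow_sub_one hmn
    (hdm.trans (Dvd.intro _ (geom_sum_mul X m))) (hdn.trans (Dvd.intro _ (geom_sum_mul X n)))
  have hirr : Irreducible (X - 1 : R[X]) := by simpa using irreducible_X_sub_C (1 : R)
  refine (hirr.dvd_iff.mp hd).resolve_right fun hassoc ↦ ?_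
  have hm0 : m = 0 := by exact_mod_cast X_sub_one_dvd_geom_sum_iff.mp (hassoc.dvd.trans hdm)
  have hn0 : n = 0 := by exact_mod_cast X_sub_one_dvd_geom_sum_iff.mp (hassoc.dvd.trans hdn)
  simp [hm0, hn0] at hmn

end GeomSum

theorem Ideal.iInf_span_mul_eq_span_mul_prod {α ι : Type*} [CommRing α] [IsDomain α]
    [DecompositionMonoid α] [Fintype ι] [Nonempty ι] {c : α} (hc : c ≠ 0) {f : ι → α}
    (hf : Pairwise fun i j ↦ IsRelPrime (f i) (f j)) :
    ⨅ i, Ideal.span {c * f i} = Ideal.span {c * ∏ i, f i} := by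
  ext y
  simp only [Ideal.mem_iInf, Ideal.mem_span_singleton]
  refine ⟨fun h ↦ ?_, fun h i ↦ (mul_dvd_mul_left c (dvd_prod_of_mem f (mem_univ i))).trans h⟩
  obtain ⟨z, rfl⟩ := (dvd_mul_right c _).trans (h (Classical.arbitrary ι))
  refine mul_dvd_mul_left c (prod_dvd_of_isRelPrime (fun i _ j _ hij ↦ hf hij) fun i _ ↦ ?_)
  exact (mul_dvd_mul_iff_left hc).mp (h i)

theorem inf_span_one_sub_pow_general
    (s : ℕ) (hs : 0 < s) (p : Fin s → ℕ) (r : Fin s → ℕ)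
    (hp : ∀ i, (p i).Prime)
    (hdist : ∀ i j, i ≠ j → p i ≠ p j) :
    (⨅ i : Fin s, Ideal.span {(1 : Polynomial ℤ) - X ^ (p i ^ r i)})
      = Ideal.span
          {(1 - X) * ∏ i : Fin s, ∑ j ∈ Finset.range (p i ^ r i), (X : Polynomial ℤ) ^ j} := by
  have : Nonempty (Fin s) := ⟨⟨0, hs⟩⟩
  simp_rw [← mul_neg_geom_sum]
  refine Ideal.iInf_span_mul_eq_span_mul_prod ?_ fun i j hij ↦ isRelPrime_geom_sum ?_
  · rw [← neg_sub, neg_ne_zero, ← C_1]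
    exact X_sub_C_ne_zero 1
  · exact ((Nat.coprime_primes (hp i) (hp j)).mpr (hdist i j hij)).pow _ _

/-- For pairwise distinct primes `p₁, …, p_s` and positive integers `r₁, …, r_s`, the
intersection of the ideals `(1 - t^{pᵢ^{rᵢ}})` of `ℤ[t]` equals the principal ideal
generated by `(1 - t) * ∏ᵢ (1 + t + ⋯ + t^{pᵢ^{rᵢ} - 1})`. -/
theorem inf_span_one_sub_pow
    (s : ℕ) (hs : 0 < s) (p : Fin s → ℕ) (r : Fin s → ℕ)
    (hp : ∀ i, (p i).Prime) (hr : ∀ i, 0 < r i)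
    (hdist : ∀ i j, i ≠ j → p i ≠ p j) :
    (⨅ i : Fin s, Ideal.span {(1 : Polynomial ℤ) - X ^ (p i ^ r i)})
      = Ideal.span
          {(1 - X) * ∏ i : Fin s, ∑ j ∈ Finset.range (p i ^ r i), (X : Polynomial ℤ) ^ j} :=
  inf_span_one_sub_pow_general s hs p r hp hdist
end

section
/- Let K be an abelian group equipped with a biadditive form χ : K × K → ℤ whose left kernel and right kernel coincide; denote this common kernel by Ker(χ). If the ℚ-vector space (K / Ker(χ)) ⊗_ℤ ℚ is finite-dimensional, then the abelian group K / Ker(χ) is finitely generated. -/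
open TensorProduct

/-!
The map `x ↦ χ x ·` embeds `K ⧸ N` into `K → ℤ`. Extending the coordinate functionals
`ℚ`-linearly to the finite-dimensional space `ℚ ⊗ (K ⧸ N)`, the intersection of their kernels
is already the intersection of finitely many of them (the space is Artinian). Hence finitely many
coordinates `t` suffice to embed `K ⧸ N` into `t → ℤ`, whose subgroups are finitely generated.
-/

theorem Submodule.exists_finset_biInf_eq_iInf {R V S : Type*} [Ring R] [AddCommGroup V]
    [Module R V] [IsArtinian R V] (p : S → Submodule R V) :
    ∃ t : Finset S, ⨅ i ∈ t, p i = ⨅ i, p i := by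
  classical
  obtain ⟨_, ⟨t, rfl⟩, hmin⟩ := IsArtinian.set_has_minimal
    (Set.range fun t : Finset S => ⨅ i ∈ t, p i) ⟨_, ∅, rfl⟩
  refine ⟨t, le_antisymm (le_iInf fun s => ?_) (le_iInf₂ fun i _ => iInf_le p i)⟩
  have hinsert : ⨅ i ∈ insert s t, p i = ⨅ i ∈ t, p i :=
    (biInf_mono (Finset.subset_insert s t)).eq_of_not_lt (hmin _ ⟨_, rfl⟩)
  rw [Finset.iInf_insert] at hinsert
  exact inf_eq_right.mp hinsert

theorem AddGroup.fg_of_injective_pi_int {M S : Type*} [AddCommGroup M]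
    [FiniteDimensional ℚ (ℚ ⊗[ℤ] M)] (f : M →+ (S → ℤ)) (hf : Function.Injective f) :
    AddGroup.FG M := by
  let ψ (s : S) : ℚ ⊗[ℤ] M →ₗ[ℚ] ℚ := LinearMap.liftBaseChange ℚ
    (Algebra.linearMap ℤ ℚ ∘ₗ LinearMap.proj s ∘ₗ f.toIntLinearMap)
  have hψ (s : S) (m : M) : ψ s (1 ⊗ₜ m) = f m s := by simp [ψ]
  obtain ⟨t, ht⟩ := Submodule.exists_finset_biInf_eq_iInf fun s => LinearMap.ker (ψ s)
  let g : M →ₗ[ℤ] (t → ℤ) := LinearMap.pi fun i => LinearMap.proj (i : S) ∘ₗ f.toIntLinearMap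
  suffices Function.Injective g from
    Module.Finite.iff_addGroup_fg.mp (Module.Finite.of_injective g this)
  rw [← LinearMap.ker_eq_bot, LinearMap.ker_eq_bot']
  intro m hm
  have hmem : 1 ⊗ₜ m ∈ ⨅ i ∈ t, LinearMap.ker (ψ i) := by
    simp only [Submodule.mem_iInf, LinearMap.mem_ker, hψ]
    intro i hi
    exact_mod_cast congr_fun hm ⟨i, hi⟩
  rw [ht] at hmem
  refine hf (funext fun s => ?_)
  simpa [hψ] using Submodule.mem_iInf _ |>.mp hmem s

theorem quotient_by_kernel_fg_general
    (K : Type*) [AddCommGroup K] (χ : K →+ K →+ ℤ)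
    (N : AddSubgroup K) (hN : (N : Set K) = {x : K | ∀ y, χ x y = 0})
    (hfd : FiniteDimensional ℚ (ℚ ⊗[ℤ] (K ⧸ N))) :
    AddGroup.FG (K ⧸ N) := by
  let φ : K →+ (K → ℤ) := (AddMonoidHom.coeFn K ℤ).comp χ
  obtain rfl : N = φ.ker := by
    ext x
    rw [← SetLike.mem_coe, hN, AddMonoidHom.mem_ker, funext_iff]
    rfl
  exact AddGroup.fg_of_injective_pi_int _ (QuotientAddGroup.kerLift_injective φ)

/-- Let `K` be an abelian group with a biadditive form `χ : K × K → ℤ` whose left and right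
kernels coincide, and let `N` be this common kernel (an additive subgroup).  If the
`ℚ`-vector space `(K / N) ⊗_ℤ ℚ` is finite dimensional, then the abelian group `K / N` is
finitely generated. -/
theorem quotient_by_kernel_fg
    (K : Type*) [AddCommGroup K] (χ : K →+ K →+ ℤ)
    (hker : {x : K | ∀ y, χ x y = 0} = {y : K | ∀ x, χ x y = 0})
    (N : AddSubgroup K) (hN : (N : Set K) = {x : K | ∀ y, χ x y = 0})
    (hfd : FiniteDimensional ℚ (ℚ ⊗[ℤ] (K ⧸ N))) :
    AddGroup.FG (K ⧸ N) :=
  quotient_by_kernel_fg_general K χ N hN hfd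
end
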